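/- Under the same hypotheses, the backward and forward energy densities satisfy the balance laws ∂_t(|R|²) − ∂_x(c|R|²) = (c'/(2c))(|R|² S₁ − R₁ |S|²) and ∂_t(|S|²) + ∂_x(c|S|²) = −(c'/(2c))(|R|² S₁ − R₁ |S|²). -/

import Mathlib

/-!
Along the characteristics the wave system becomes a pair of transport equations: componentwise,
with `λ = -|nₜ|² + 2c²|nₓ|²`,
`Rₜ - cRₓ = (λ - ζⱼ|nₓ|²) nⱼ + c' R₁ nₓ` and `Sₜ + cSₓ = (λ - ζⱼ|nₓ|²) nⱼ - c' S₁ nₓ`,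
the lower order terms coming from differentiating the speed `c(n₁)`. Dotting with `2R`
(resp. `2S`) gives the energy balances. Since `|n| = 1` forces `n · nₜ = n · nₓ = 0`, also
`n · R = n · S = 0`, so `λ` and the isotropic part `α` of `ζ` drop out; the anisotropic part
`(γ - α) n₁ = c c'` survives, and eliminating `nₓ = (R - S) / (2c)` turns everything into the
stated source.
-/
open scoped BigOperators

/-- Partial derivative in the first (time) variable of a curried function. -/
noncomputable def ptd (f : ℝ → ℝ → ℝ) (t x : ℝ) : ℝ := deriv (fun τ => f τ x) t

/-- Partial derivative in the second (space) variable of a curried function. -/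
noncomputable def pxd (f : ℝ → ℝ → ℝ) (t x : ℝ) : ℝ := deriv (fun y => f t y) x

open Function

section PartialDerivatives

variable {f : ℝ → ℝ → ℝ} {t x : ℝ}

theorem hasDerivAt_ptd_fderiv (hf : DifferentiableAt ℝ (uncurry f) (t, x)) :
    HasDerivAt (fun τ => f τ x) (fderiv ℝ (uncurry f) (t, x) (1, 0)) t :=
  hf.hasFDerivAt.comp_hasDerivAt (f := fun τ => (τ, x)) t
    ((hasDerivAt_id' t).prodMk (hasDerivAt_const t x))

theorem hasDerivAt_pxd_fderiv (hf : DifferentiableAt ℝ (uncurry f) (t, x)) :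
    HasDerivAt (fun y => f t y) (fderiv ℝ (uncurry f) (t, x) (0, 1)) x :=
  hf.hasFDerivAt.comp_hasDerivAt (f := fun y => (t, y)) x
    ((hasDerivAt_const x t).prodMk (hasDerivAt_id' x))

theorem ptd_eq_fderiv (hf : DifferentiableAt ℝ (uncurry f) (t, x)) :
    ptd f t x = fderiv ℝ (uncurry f) (t, x) (1, 0) :=
  (hasDerivAt_ptd_fderiv hf).deriv

theorem pxd_eq_fderiv (hf : DifferentiableAt ℝ (uncurry f) (t, x)) :
    pxd f t x = fderiv ℝ (uncurry f) (t, x) (0, 1) :=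
  (hasDerivAt_pxd_fderiv hf).deriv

theorem hasDerivAt_ptd (hf : DifferentiableAt ℝ (uncurry f) (t, x)) :
    HasDerivAt (fun τ => f τ x) (ptd f t x) t :=
  ptd_eq_fderiv hf ▸ hasDerivAt_ptd_fderiv hf

theorem hasDerivAt_pxd (hf : DifferentiableAt ℝ (uncurry f) (t, x)) :
    HasDerivAt (fun y => f t y) (pxd f t x) x :=
  pxd_eq_fderiv hf ▸ hasDerivAt_pxd_fderiv hf

theorem ptd_eq_of_hasDerivAt {a : ℝ} (h : HasDerivAt (fun τ => f τ x) a t) : ptd f t x = a :=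
  h.deriv

theorem pxd_eq_of_hasDerivAt {a : ℝ} (h : HasDerivAt (fun y => f t y) a x) : pxd f t x = a :=
  h.deriv

theorem uncurry_ptd_eq_fderiv (hf : Differentiable ℝ (uncurry f)) :
    uncurry (ptd f) = fun p => fderiv ℝ (uncurry f) p (1, 0) :=
  funext fun p => ptd_eq_fderiv (hf p)

theorem uncurry_pxd_eq_fderiv (hf : Differentiable ℝ (uncurry f)) :
    uncurry (pxd f) = fun p => fderiv ℝ (uncurry f) p (0, 1) :=
  funext fun p => pxd_eq_fderiv (hf p)

theorem ContDiff.uncurry_ptd {k : ℕ} (hf : ContDiff ℝ (k + 1) (uncurry f)) :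
    ContDiff ℝ k (uncurry (ptd f)) := by
  rw [uncurry_ptd_eq_fderiv (hf.differentiable (by simp))]
  exact (hf.fderiv_right le_rfl).clm_apply contDiff_const

theorem ContDiff.uncurry_pxd {k : ℕ} (hf : ContDiff ℝ (k + 1) (uncurry f)) :
    ContDiff ℝ k (uncurry (pxd f)) := by
  rw [uncurry_pxd_eq_fderiv (hf.differentiable (by simp))]
  exact (hf.fderiv_right le_rfl).clm_apply contDiff_const

theorem ptd_pxd_comm (hf : ContDiff ℝ 2 (uncurry f)) (t x : ℝ) :
    ptd (pxd f) t x = pxd (ptd f) t x := by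
  have hd : Differentiable ℝ (uncurry f) := hf.differentiable two_ne_zero
  have hd2 : Differentiable ℝ (fderiv ℝ (uncurry f)) :=
    (hf.fderiv_right (m := 1) le_rfl).differentiable one_ne_zero
  have second (v w : ℝ × ℝ) : fderiv ℝ (fun p => fderiv ℝ (uncurry f) p w) (t, x) v
      = fderiv ℝ (fderiv ℝ (uncurry f)) (t, x) v w := by
    rw [fderiv_clm_apply (hd2 _) (differentiableAt_const w)]
    simp
  rw [ptd_eq_fderiv ((hf.uncurry_pxd (k := 1)).differentiable one_ne_zero _),
    pxd_eq_fderiv ((hf.uncurry_ptd (k := 1)).differentiable one_ne_zero _),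
    uncurry_pxd_eq_fderiv hd, uncurry_ptd_eq_fderiv hd, second, second]
  exact hf.contDiffAt.isSymmSndFDerivAt (by simp) _ _

end PartialDerivatives

/-- `σ = -1` gives `R = ∂ₜu + w ∂ₓu` and `σ = 1` gives `S = ∂ₜu - w ∂ₓu`. -/
noncomputable def charDeriv (u w : ℝ → ℝ → ℝ) (σ t x : ℝ) : ℝ :=
  ptd u t x - σ * w t x * pxd u t x

section Characteristics

variable {u w : ℝ → ℝ → ℝ} {σ t x wt wx : ℝ}

theorem hasDerivAt_charDeriv_time (hu : ContDiff ℝ 2 (uncurry u))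
    (hwt : HasDerivAt (fun τ => w τ x) wt t) :
    HasDerivAt (fun τ => charDeriv u w σ τ x)
      (ptd (ptd u) t x - σ * (wt * pxd u t x + w t x * ptd (pxd u) t x)) t :=
  (hasDerivAt_ptd ((hu.uncurry_ptd (k := 1)).differentiable one_ne_zero _)).sub
    ((hwt.const_mul σ).mul
      (hasDerivAt_ptd ((hu.uncurry_pxd (k := 1)).differentiable one_ne_zero _)))
    |>.congr_deriv (by ring)

theorem hasDerivAt_charDeriv_space (hu : ContDiff ℝ 2 (uncurry u))
    (hwx : HasDerivAt (fun y => w t y) wx x) :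
    HasDerivAt (fun y => charDeriv u w σ t y)
      (pxd (ptd u) t x - σ * (wx * pxd u t x + w t x * pxd (pxd u) t x)) x :=
  (hasDerivAt_pxd ((hu.uncurry_ptd (k := 1)).differentiable one_ne_zero _)).sub
    ((hwx.const_mul σ).mul
      (hasDerivAt_pxd ((hu.uncurry_pxd (k := 1)).differentiable one_ne_zero _)))
    |>.congr_deriv (by ring)

theorem ptd_charDeriv_add_pxd (hu : ContDiff ℝ 2 (uncurry u)) (hσ : σ ^ 2 = 1)
    (hwt : HasDerivAt (fun τ => w τ x) wt t) (hwx : HasDerivAt (fun y => w t y) wx x) :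
    ptd (charDeriv u w σ) t x + σ * w t x * pxd (charDeriv u w σ) t x
      = ptd (ptd u) t x - pxd (fun t x => w t x ^ 2 * pxd u t x) t x
        + (w t x * wx - σ * wt) * pxd u t x := by
  have hflux : pxd (fun t x => w t x ^ 2 * pxd u t x) t x
      = 2 * w t x * wx * pxd u t x + w t x ^ 2 * pxd (pxd u) t x :=
    ((hwx.fun_pow 2).fun_mul
      (hasDerivAt_pxd ((hu.uncurry_pxd (k := 1)).differentiable one_ne_zero _))).deriv.trans
      (by ring)
  rw [ptd_eq_of_hasDerivAt (hasDerivAt_charDeriv_time hu hwt),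
    pxd_eq_of_hasDerivAt (hasDerivAt_charDeriv_space hu hwx),
    hflux, ptd_pxd_comm hu]
  linear_combination (-(w t x * wx * pxd u t x + w t x ^ 2 * pxd (pxd u) t x)) * hσ

theorem ptd_sum_sq_add_pxd_mul_sum_sq {ι : Type*} [Fintype ι] {R : ι → ℝ → ℝ → ℝ}
    (hRt : ∀ j, DifferentiableAt ℝ (fun τ => R j τ x) t)
    (hRx : ∀ j, DifferentiableAt ℝ (fun y => R j t y) x)
    (hwx : HasDerivAt (fun y => w t y) wx x) (σ : ℝ) :
    ptd (fun t x => ∑ j, R j t x ^ 2) t x + σ * pxd (fun t x => w t x * ∑ j, R j t x ^ 2) t x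
      = 2 * ∑ j, R j t x * (ptd (R j) t x + σ * w t x * pxd (R j) t x)
        + σ * wx * ∑ j, R j t x ^ 2 := by
  have hRt' (j : ι) : HasDerivAt (fun τ => R j τ x) (ptd (R j) t x) t := (hRt j).hasDerivAt
  have hRx' (j : ι) : HasDerivAt (fun y => R j t y) (pxd (R j) t x) x := (hRx j).hasDerivAt
  have hx : HasDerivAt (fun y => ∑ j, R j t y ^ 2) (∑ j, 2 * R j t x * pxd (R j) t x) x :=
    HasDerivAt.fun_sum fun j _ => ((hRx' j).fun_pow 2).congr_deriv (by ring)
  have ht : ptd (fun t x => ∑ j, R j t x ^ 2) t x = ∑ j, 2 * R j t x * ptd (R j) t x :=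
    (HasDerivAt.fun_sum fun j _ => ((hRt' j).fun_pow 2).congr_deriv (by ring)).deriv
  have htx : pxd (fun t x => w t x * ∑ j, R j t x ^ 2) t x
      = wx * ∑ j, R j t x ^ 2 + w t x * ∑ j, 2 * R j t x * pxd (R j) t x :=
    (hwx.fun_mul hx).deriv
  rw [ht, htx]
  simp only [Finset.mul_sum, ← Finset.sum_add_distrib]
  refine Finset.sum_congr rfl fun j _ => ?_
  ring

theorem ptd_sum_sq_charDeriv_add_pxd {ι : Type*} [Fintype ι] {u R : ι → ℝ → ℝ → ℝ}
    {W : ι → ℝ}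
    (hu : ∀ j, ContDiff ℝ 2 (uncurry (u j))) (hσ : σ ^ 2 = 1)
    (hwt : HasDerivAt (fun τ => w τ x) wt t) (hwx : HasDerivAt (fun y => w t y) wx x)
    (hR : ∀ j, R j = charDeriv (u j) w σ)
    (hW : ∀ j, ptd (ptd (u j)) t x - pxd (fun t x => w t x ^ 2 * pxd (u j) t x) t x = W j) :
    ptd (fun t x => ∑ j, R j t x ^ 2) t x + σ * pxd (fun t x => w t x * ∑ j, R j t x ^ 2) t x
      = 2 * ∑ j, R j t x * (W j + (w t x * wx - σ * wt) * pxd (u j) t x)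
        + σ * wx * ∑ j, R j t x ^ 2 := by
  have hRt (j : ι) : DifferentiableAt ℝ (fun τ => R j τ x) t :=
    hR j ▸ (hasDerivAt_charDeriv_time (hu j) hwt).differentiableAt
  have hRx (j : ι) : DifferentiableAt ℝ (fun y => R j t y) x :=
    hR j ▸ (hasDerivAt_charDeriv_space (hu j) hwx).differentiableAt
  rw [ptd_sum_sq_add_pxd_mul_sum_sq hRt hRx hwx σ]
  congr 2
  refine Finset.sum_congr rfl fun j _ => ?_
  rw [hR j, ptd_charDeriv_add_pxd (hu j) hσ hwt hwx, hW j]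

end Characteristics

theorem sum_mul_eq_zero_of_sum_sq_eq {ι : Type*} [Fintype ι] {g : ι → ℝ → ℝ} {g' : ι → ℝ}
    {s C : ℝ} (hg : ∀ j, HasDerivAt (g j) (g' j) s) (h : ∀ s, ∑ j, g j s ^ 2 = C) :
    ∑ j, g j s * g' j = 0 := by
  have hsum : HasDerivAt (fun s => ∑ j, g j s ^ 2) (2 * ∑ j, g j s * g' j) s := by
    rw [Finset.mul_sum]
    exact HasDerivAt.fun_sum fun j _ => ((hg j).fun_pow 2).congr_deriv (by ring)
  have hconst : HasDerivAt (fun s => ∑ j, g j s ^ 2) 0 s := by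
    simpa only [h] using hasDerivAt_const s C
  linarith [hsum.unique hconst]

theorem hasDerivAt_sqrt_add_mul_sq {a b s : ℝ} (h : a + b * s ^ 2 ≠ 0) :
    HasDerivAt (fun s => √(a + b * s ^ 2)) (b * s / √(a + b * s ^ 2)) s := by
  have hq : HasDerivAt (fun s => a + b * s ^ 2) (b * (2 * s)) s :=
    ((hasDerivAt_pow 2 s).const_mul b |>.const_add a).congr_deriv (by ring)
  convert hq.sqrt h using 1
  field_simp

theorem balance_source_eq {α γ σ c k μ : ℝ} (hσ : σ ^ 2 = 1) (hc : c ≠ 0)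
    {a b m ζ P Q : Fin 3 → ℝ} (hζ0 : ζ 0 = γ) (hζ1 : ζ 1 = α) (hζ2 : ζ 2 = α)
    (hma : ∑ j, m j * a j = 0) (hmb : ∑ j, m j * b j = 0) (hk : k * c = (γ - α) * m 0)
    (hP : ∀ j, P j = a j - σ * c * b j) (hQ : ∀ j, Q j = a j + σ * c * b j) :
    2 * ∑ j, P j * ((μ - ζ j * ∑ i, b i ^ 2) * m j + (c * (k * b 0) - σ * (k * a 0)) * b j)
        + σ * (k * b 0) * ∑ j, P j ^ 2
      = k / (2 * c) * ((∑ j, P j ^ 2) * Q 0 - P 0 * ∑ j, Q j ^ 2) := by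
  rw [div_mul_eq_mul_div, eq_div_iff (mul_ne_zero two_ne_zero hc)]
  simp only [Fin.sum_univ_three, hP, hQ, hζ0, hζ1, hζ2] at hma hmb ⊢
  -- `m · P = 0` removes `μ` and the isotropic part `α` of `ζ`; `hk` rewrites what is left.
  linear_combination (2 * c * (2 * μ - 2 * α * (b 0 ^ 2 + b 1 ^ 2 + b 2 ^ 2))) * hma
    - (2 * σ * c ^ 2 * (2 * μ - 2 * α * (b 0 ^ 2 + b 1 ^ 2 + b 2 ^ 2))) * hmb
    + (4 * c * (b 0 ^ 2 + b 1 ^ 2 + b 2 ^ 2) * (a 0 - σ * c * b 0)) * hk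
    + (4 * c ^ 2 * k * (a 0 * (b 1 ^ 2 + b 2 ^ 2) - b 0 * (a 1 * b 1 + a 2 * b 2))) * hσ

theorem stmt6_general (α γ : ℝ)
    (n : Fin 3 → ℝ → ℝ → ℝ)
    (hsm : ∀ i, ContDiff ℝ 2 (Function.uncurry (n i)))
    (hunit : ∀ t x, ∑ j, (n j t x) ^ 2 = 1)
    (c : ℝ → ℝ) (hc : c = fun s => Real.sqrt (α + (γ - α) * s ^ 2))
    (hpos : ∀ t x, 0 < α + (γ - α) * (n 0 t x) ^ 2)
    (ζ : Fin 3 → ℝ) (hζ0 : ζ 0 = γ) (hζ1 : ζ 1 = α) (hζ2 : ζ 2 = α)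
    (hwave : ∀ i t x,
      ptd (fun t x => ptd (n i) t x) t x
        - pxd (fun t x => (c (n 0 t x)) ^ 2 * pxd (n i) t x) t x
      = (-(∑ j, (ptd (n j) t x) ^ 2)
          + (2 * (c (n 0 t x)) ^ 2 - ζ i) * (∑ j, (pxd (n j) t x) ^ 2)) * n i t x)
    (R S : Fin 3 → ℝ → ℝ → ℝ)
    (hR : ∀ i t x, R i t x = ptd (n i) t x + c (n 0 t x) * pxd (n i) t x)
    (hS : ∀ i t x, S i t x = ptd (n i) t x - c (n 0 t x) * pxd (n i) t x)
    (cp : ℝ → ℝ) (hcp : ∀ s, cp s = (γ - α) * s / c s) :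
    ∀ t x,
      (ptd (fun t x => ∑ j, (R j t x) ^ 2) t x
          - pxd (fun t x => c (n 0 t x) * ∑ j, (R j t x) ^ 2) t x
        = (cp (n 0 t x) / (2 * c (n 0 t x))) *
            ((∑ j, (R j t x) ^ 2) * S 0 t x - R 0 t x * (∑ j, (S j t x) ^ 2))) ∧
      (ptd (fun t x => ∑ j, (S j t x) ^ 2) t x
          + pxd (fun t x => c (n 0 t x) * ∑ j, (S j t x) ^ 2) t x
        = -((cp (n 0 t x) / (2 * c (n 0 t x))) *
            ((∑ j, (R j t x) ^ 2) * S 0 t x - R 0 t x * (∑ j, (S j t x) ^ 2)))) := by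
  intro t x
  have hdiff (j : Fin 3) : DifferentiableAt ℝ (uncurry (n j)) (t, x) :=
    (hsm j).differentiable two_ne_zero _
  have hc0 : c (n 0 t x) ≠ 0 := by rw [hc]; exact (Real.sqrt_pos.2 (hpos t x)).ne'
  have hcd : HasDerivAt c (cp (n 0 t x)) (n 0 t x) := by
    rw [hcp, hc]; exact hasDerivAt_sqrt_add_mul_sq (hpos t x).ne'
  have hwt : HasDerivAt (fun τ => c (n 0 τ x)) (cp (n 0 t x) * ptd (n 0) t x) t :=
    hcd.comp t (hasDerivAt_ptd (hdiff 0))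
  have hwx : HasDerivAt (fun y => c (n 0 t y)) (cp (n 0 t x) * pxd (n 0) t x) x :=
    hcd.comp x (hasDerivAt_pxd (hdiff 0))
  set μ := -(∑ j, ptd (n j) t x ^ 2) + 2 * c (n 0 t x) ^ 2 * ∑ j, pxd (n j) t x ^ 2
  have hW (j : Fin 3) : ptd (ptd (n j)) t x - pxd (fun t x => c (n 0 t x) ^ 2 * pxd (n j) t x) t x
      = (μ - ζ j * ∑ i, pxd (n i) t x ^ 2) * n j t x :=
    (hwave j t x).trans (by ring)
  have hRc (j : Fin 3) : R j = charDeriv (n j) (fun t x => c (n 0 t x)) (-1) :=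
    funext₂ fun t x => by rw [hR, charDeriv]; ring
  have hSc (j : Fin 3) : S j = charDeriv (n j) (fun t x => c (n 0 t x)) 1 :=
    funext₂ fun t x => by rw [hS, charDeriv]; ring
  have hma := sum_mul_eq_zero_of_sum_sq_eq (fun j => hasDerivAt_ptd (hdiff j)) (hunit · x)
  have hmb := sum_mul_eq_zero_of_sum_sq_eq (fun j => hasDerivAt_pxd (hdiff j)) (hunit t)
  have hk : cp (n 0 t x) * c (n 0 t x) = (γ - α) * n 0 t x := by rw [hcp]; field_simp
  constructor
  · linear_combination ptd_sum_sq_charDeriv_add_pxd hsm (by norm_num) hwt hwx hRc hW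
      + balance_source_eq (σ := -1) (μ := μ) (by norm_num) hc0 hζ0 hζ1 hζ2 hma hmb hk
        (P := fun j => R j t x) (Q := fun j => S j t x)
        (fun j => by rw [hR]; ring) (fun j => by rw [hS]; ring)
  · linear_combination ptd_sum_sq_charDeriv_add_pxd hsm (by norm_num) hwt hwx hSc hW
      + balance_source_eq (σ := 1) (μ := μ) (by norm_num) hc0 hζ0 hζ1 hζ2 hma hmb hk
        (P := fun j => S j t x) (Q := fun j => R j t x)
        (fun j => by rw [hS]; ring) (fun j => by rw [hR]; ring)

/-- Balance laws for the backward and forward energy densities: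
∂_t|R|² − ∂_x(c|R|²) = (c'/(2c))(|R|²S₁ − R₁|S|²) and
∂_t|S|² + ∂_x(c|S|²) = −(c'/(2c))(|R|²S₁ − R₁|S|²). -/
theorem stmt6 (α γ : ℝ) (hα : 0 < α) (hγ : 0 < γ)
    (n : Fin 3 → ℝ → ℝ → ℝ)
    (hsm : ∀ i, ContDiff ℝ 2 (Function.uncurry (n i)))
    (hunit : ∀ t x, ∑ j, (n j t x) ^ 2 = 1)
    (c : ℝ → ℝ) (hc : c = fun s => Real.sqrt (α + (γ - α) * s ^ 2))
    (hpos : ∀ t x, 0 < α + (γ - α) * (n 0 t x) ^ 2)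
    (ζ : Fin 3 → ℝ) (hζ0 : ζ 0 = γ) (hζ1 : ζ 1 = α) (hζ2 : ζ 2 = α)
    (hwave : ∀ i t x,
      ptd (fun t x => ptd (n i) t x) t x
        - pxd (fun t x => (c (n 0 t x)) ^ 2 * pxd (n i) t x) t x
      = (-(∑ j, (ptd (n j) t x) ^ 2)
          + (2 * (c (n 0 t x)) ^ 2 - ζ i) * (∑ j, (pxd (n j) t x) ^ 2)) * n i t x)
    (R S : Fin 3 → ℝ → ℝ → ℝ)
    (hR : ∀ i t x, R i t x = ptd (n i) t x + c (n 0 t x) * pxd (n i) t x)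
    (hS : ∀ i t x, S i t x = ptd (n i) t x - c (n 0 t x) * pxd (n i) t x)
    (cp : ℝ → ℝ) (hcp : ∀ s, cp s = (γ - α) * s / c s) :
    ∀ t x,
      (ptd (fun t x => ∑ j, (R j t x) ^ 2) t x
          - pxd (fun t x => c (n 0 t x) * ∑ j, (R j t x) ^ 2) t x
        = (cp (n 0 t x) / (2 * c (n 0 t x))) *
            ((∑ j, (R j t x) ^ 2) * S 0 t x - R 0 t x * (∑ j, (S j t x) ^ 2))) ∧
      (ptd (fun t x => ∑ j, (S j t x) ^ 2) t x
          + pxd (fun t x => c (n 0 t x) * ∑ j, (S j t x) ^ 2) t x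
        = -((cp (n 0 t x) / (2 * c (n 0 t x))) *
            ((∑ j, (R j t x) ^ 2) * S 0 t x - R 0 t x * (∑ j, (S j t x) ^ 2)))) :=
  stmt6_general α γ n hsm hunit c hc hpos ζ hζ0 hζ1 hζ2 hwave R S hR hS cp hcp
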